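/- Let X be a Dedekind complete pre-Riesz space, let J be a nonempty directed index set, and let (P_j)_{j ∈ J} be a family of band projections on X such that P_j ≤ P_i whenever j ≥ i (a decreasing net). Then there exists a band projection P₀ on X such that: (a) for each x ∈ X₊, P₀x is the infimum of the set {P_j x : j ∈ J} (i.e. the net (P_j x) decreases to P₀x); and (b) the range of P₀ equals ⋂_{j ∈ J} P_j X. -/

import Mathlib

/-!
Call a linear map an order projection if it is idempotent and lies between `0` and `I` on the
positive cone. Band projections are order projections, and in a pre-Riesz space the converse
holds: range and kernel of an order projection `P` are each other's disjoint complements. The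
non-trivial inclusion says that `y ⊥ P y` forces `P y = 0`; writing `y = b + c` with `b = P y`,
the disjointness makes `±c` and `±(2b + c)` have the same upper bounds, and the pre-Riesz
property applied to the pair `-2b ± c` (and to `2b ± c`) gives `b ≥ 0` and `b ≤ 0`.

For a decreasing net `(P j)` of order projections, Dedekind completeness gives the infimum
`P₀ x` of `P j x` on the cone. It is additive (the nets are directed) and positively homogeneous,
so it extends linearly, the cone being generating. From `0 ≤ P₀ ≤ P j` every `P j` fixes the
range of `P₀`, and a common fixed point `z = p - q` of all `P j` satisfies `P j p = z + P j q`,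
so `P₀ z = z`. Thus `P₀` is an order projection, hence a band projection, with range
`⋂ j, range (P j)`.
-/

open Pointwise

variable {X : Type*} [AddCommGroup X] [PartialOrder X] [IsOrderedAddMonoid X] [Module ℝ X]
    [PosSMulStrictMono ℝ X] [PosSMulReflectLT ℝ X]

/-- Two elements of an ordered vector space are disjoint if the sets `{x+y, -x-y}` and
`{x-y, y-x}` have the same set of upper bounds. -/
def UDisjoint (x y : X) : Prop :=
  upperBounds ({x + y, -x - y} : Set X) = upperBounds ({x - y, y - x} : Set X)

/-- The disjoint complement `S^⊥` of a set `S`. -/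
def dComp (S : Set X) : Set X := {x : X | ∀ s ∈ S, UDisjoint x s}

/-- A band: a set equal to its double disjoint complement. -/
def IsBand (B : Set X) : Prop := B = dComp (dComp B)

/-- A projection band: a band `B` with `B ∩ B^⊥ = {0}` and `B + B^⊥ = X`. -/
def IsProjBand (B : Set X) : Prop :=
  IsBand B ∧ B ∩ dComp B = {0} ∧ ∀ x : X, ∃ b ∈ B, ∃ c ∈ dComp B, x = b + c

/-- A positive linear operator. -/
def IsPosMap (T : X →ₗ[ℝ] X) : Prop := ∀ x : X, 0 ≤ x → 0 ≤ T x

/-- A band projection: a linear projection whose range is a projection band and whose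
kernel is the disjoint complement of the range. -/
def IsBandProj (P : X →ₗ[ℝ] X) : Prop :=
  P ∘ₗ P = P ∧ IsProjBand (Set.range ⇑P) ∧ (LinearMap.ker P : Set X) = dComp (Set.range ⇑P)

/-- A pre-Riesz space: for every nonempty finite `A ⊆ X` and every `x`, if the upper bounds
of `x + A` are contained in the upper bounds of `A`, then `x ≥ 0`. -/
def IsPreRiesz (X : Type*) [AddCommGroup X] [PartialOrder X] [IsOrderedAddMonoid X] [Module ℝ X]
    [PosSMulStrictMono ℝ X] [PosSMulReflectLT ℝ X] : Prop :=
  ∀ (A : Set X) (x : X), A.Finite → A.Nonempty →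
    upperBounds ((x + ·) '' A) ⊆ upperBounds A → 0 ≤ x

open Set

section GLB

variable {J α : Type*} [Preorder J] [AddCommGroup α] [PartialOrder α] [IsOrderedAddMonoid α]

theorem exists_isGLB_range_of_antitone
    (hdc : ∀ A : Set α, A.Nonempty → DirectedOn (· ≤ ·) A → BddAbove A → ∃ s, IsLUB A s)
    [Nonempty J] [IsDirectedOrder J] {g : J → α} (hg : Antitone g) (hbdd : BddBelow (range g)) :
    ∃ a, IsGLB (range g) a := by
  obtain ⟨s, hs⟩ := hdc (-range g) (range_nonempty g).neg
    (by rw [neg_range]; exact directedOn_range.2 (directed_of_isDirected_le hg.neg))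
    (bddAbove_neg.2 hbdd)
  exact ⟨-s, by rwa [← isLUB_neg', neg_neg]⟩

theorem IsGLB.range_add_of_antitone [IsDirectedOrder J] {g h : J → α} {a b : α}
    (hg : Antitone g) (hh : Antitone h) (ha : IsGLB (range g) a) (hb : IsGLB (range h) b) :
    IsGLB (range fun j => g j + h j) (a + b) := by
  have hab := ha.add hb
  refine ⟨?_, fun c hc => hab.2 ?_⟩
  · rintro _ ⟨j, rfl⟩
    exact hab.1 (add_mem_add ⟨j, rfl⟩ ⟨j, rfl⟩)
  · rintro _ ⟨_, ⟨i, rfl⟩, _, ⟨j, rfl⟩, rfl⟩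
    obtain ⟨k, hik, hjk⟩ := exists_ge_ge i j
    exact (hc ⟨k, rfl⟩).trans (add_le_add (hg hik) (hh hjk))

end GLB

theorem IsGLB.range_smul_of_pos {J F : Type*} [AddCommGroup F] [PartialOrder F] [Module ℝ F]
    [PosSMulMono ℝ F] [PosSMulReflectLE ℝ F] {g : J → F} {a : F} {c : ℝ} (hc : 0 < c)
    (ha : IsGLB (range g) a) : IsGLB (range fun j => c • g j) (c • a) := by
  have := (OrderIso.smulRight (α := ℝ) (β := F) hc).isGLB_image'.2 ha
  rwa [← range_comp] at this

section Cone

variable {E F : Type*} [AddCommGroup E] [PartialOrder E] [IsOrderedAddMonoid E] [IsDirectedOrder E]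

theorem exists_nonneg_sub_eq (x : E) : ∃ p q : E, 0 ≤ p ∧ 0 ≤ q ∧ x = p - q := by
  obtain ⟨u, hxu, hu⟩ := exists_ge_ge x 0
  exact ⟨u, u - x, hu, sub_nonneg.2 hxu, (sub_sub_cancel u x).symm⟩

variable [Module ℝ E] [AddCommGroup F] [Module ℝ F]

theorem LinearMap.ext_of_nonneg {S T : E →ₗ[ℝ] F} (h : ∀ x, 0 ≤ x → S x = T x) : S = T := by
  ext x
  obtain ⟨p, q, hp, hq, rfl⟩ := exists_nonneg_sub_eq x
  rw [map_sub, map_sub, h p hp, h q hq]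

theorem exists_linearMap_eq_of_nonneg [PosSMulMono ℝ E] (f : E → F)
    (hadd : ∀ p q, 0 ≤ p → 0 ≤ q → f (p + q) = f p + f q)
    (hsmul : ∀ c : ℝ, 0 < c → ∀ p, 0 ≤ p → f (c • p) = c • f p) :
    ∃ T : E →ₗ[ℝ] F, ∀ x, 0 ≤ x → T x = f x := by
  have hwd : ∀ p q p' q' : E, 0 ≤ p → 0 ≤ q → 0 ≤ p' → 0 ≤ q' → p - q = p' - q' →
      f p - f q = f p' - f q' := by
    intro p q p' q' hp hq hp' hq' h
    rw [sub_eq_sub_iff_add_eq_add] at h ⊢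
    rw [← hadd _ _ hp hq', ← hadd _ _ hp' hq, h]
  choose p q hp hq hpq using exists_nonneg_sub_eq (E := E)
  set g : E → F := fun x => f (p x) - f (q x)
  have hg : ∀ x p' q', 0 ≤ p' → 0 ≤ q' → x = p' - q' → g x = f p' - f q' := fun x _ _ hp' hq' hx =>
    hwd _ _ _ _ (hp x) (hq x) hp' hq' ((hpq x).symm.trans hx)
  have hg_add : ∀ x y, g (x + y) = g x + g y := by
    intro x y
    rw [hg (x + y) (p x + p y) (q x + q y) (add_nonneg (hp x) (hp y)) (add_nonneg (hq x) (hq y))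
      (by rw [add_sub_add_comm, ← hpq x, ← hpq y]), hadd _ _ (hp x) (hp y), hadd _ _ (hq x) (hq y)]
    change _ = (f (p x) - f (q x)) + (f (p y) - f (q y))
    abel
  have hg_smul : ∀ c : ℝ, 0 < c → ∀ x, g (c • x) = c • g x := by
    intro c hc x
    rw [hg (c • x) (c • p x) (c • q x) (smul_nonneg hc.le (hp x)) (smul_nonneg hc.le (hq x))
      (by rw [← smul_sub, ← hpq]), hsmul c hc _ (hp x), hsmul c hc _ (hq x), smul_sub]
  have hf0 : f 0 = 0 := by simpa using hadd 0 0 le_rfl le_rfl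
  let G : E →+ F := AddMonoidHom.mk' g hg_add
  have hG_smul : ∀ (c : ℝ) x, G (c • x) = c • G x := by
    intro c x
    rcases lt_trichotomy c 0 with hc | rfl | hc
    · rw [show c • x = -((-c) • x) by simp, map_neg, show c • G x = -((-c) • G x) by simp]
      exact congrArg Neg.neg (hg_smul _ (neg_pos.2 hc) x)
    · simp
    · exact hg_smul c hc x
  refine ⟨{ G with map_smul' := hG_smul }, fun x hx => ?_⟩
  change g x = f x
  rw [hg x x 0 hx le_rfl (sub_zero x).symm, hf0, sub_zero]

end Cone

theorem exists_linearMap_isGLB_of_antitone {J E F : Type*} [Preorder J] [Nonempty J]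
    [IsDirectedOrder J] [AddCommGroup E] [PartialOrder E] [IsOrderedAddMonoid E] [Module ℝ E]
    [PosSMulMono ℝ E] [IsDirectedOrder E] [AddCommGroup F] [PartialOrder F]
    [IsOrderedAddMonoid F] [Module ℝ F] [PosSMulMono ℝ F] [PosSMulReflectLE ℝ F]
    (hdc : ∀ A : Set F, A.Nonempty → DirectedOn (· ≤ ·) A → BddAbove A → ∃ s, IsLUB A s)
    (T : J → E →ₗ[ℝ] F) (hT : ∀ j x, 0 ≤ x → 0 ≤ T j x)
    (hanti : ∀ x, 0 ≤ x → Antitone fun j => T j x) :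
    ∃ T₀ : E →ₗ[ℝ] F, ∀ x, 0 ≤ x → IsGLB (range fun j => T j x) (T₀ x) := by
  have hglb : ∀ x, ∃ a, 0 ≤ x → IsGLB (range fun j => T j x) a := by
    intro x
    by_cases hx : 0 ≤ x
    · obtain ⟨a, ha⟩ := exists_isGLB_range_of_antitone hdc (hanti x hx)
        ⟨0, by rintro _ ⟨j, rfl⟩; exact hT j x hx⟩
      exact ⟨a, fun _ => ha⟩
    · exact ⟨0, fun h => absurd h hx⟩
  choose f hf using hglb
  obtain ⟨T₀, hT₀⟩ := exists_linearMap_eq_of_nonneg f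
    (fun p q hp hq => (hf _ (add_nonneg hp hq)).unique <| by
      simpa only [map_add] using (hf p hp).range_add_of_antitone (hanti p hp) (hanti q hq) (hf q hq))
    (fun c hc p hp => (hf _ (smul_nonneg hc.le hp)).unique <| by
      simpa only [map_smul] using (hf p hp).range_smul_of_pos hc)
  exact ⟨T₀, fun x hx => hT₀ x hx ▸ hf x hx⟩

theorem mem_upperBounds_pair {α : Type*} [Preorder α] {a b u : α} :
    u ∈ upperBounds {a, b} ↔ a ≤ u ∧ b ≤ u := by
  simp [upperBounds_insert]

section Disjoint

variable {E : Type*} [AddCommGroup E] [PartialOrder E]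

theorem UDisjoint.symm {x y : E} (h : UDisjoint x y) : UDisjoint y x := by
  rwa [UDisjoint, add_comm y, neg_sub_comm, pair_comm (y - x)]

theorem uDisjoint_iff {x y : E} :
    UDisjoint x y ↔ upperBounds {x + y, -(x + y)} = upperBounds {x - y, -(x - y)} := by
  rw [UDisjoint, neg_add', neg_sub]

variable [Module ℝ E] [PosSMulMono ℝ E]

theorem nonneg_of_nonneg_add_self {c : E} (h : 0 ≤ c + c) : 0 ≤ c := by
  have := smul_nonneg (inv_nonneg.2 (zero_le_two : (0 : ℝ) ≤ 2)) h
  rwa [← two_smul ℝ c, smul_smul, inv_mul_cancel₀ two_ne_zero, one_smul] at this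

variable [IsOrderedAddMonoid E]

theorem UDisjoint.nonneg_of_add_nonneg {b c : E} (h : UDisjoint b c) (hbc : 0 ≤ b + c) :
    0 ≤ b ∧ 0 ≤ c := by
  have hub : b + c ∈ upperBounds {b + c, -(b + c)} :=
    mem_upperBounds_pair.2 ⟨le_rfl, (neg_nonpos.2 hbc).trans hbc⟩
  rw [uDisjoint_iff.1 h, mem_upperBounds_pair] at hub
  refine ⟨nonneg_of_nonneg_add_self ?_, nonneg_of_nonneg_add_self ?_⟩
  · simpa [← sub_nonneg, sub_eq_add_neg, add_assoc] using hub.2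
  · simpa [← sub_nonneg] using hub.1

end Disjoint

section OrderProj

variable {E : Type*} [AddCommGroup E] [PartialOrder E] [Module ℝ E]

structure IsOrderProj (P : E →ₗ[ℝ] E) : Prop where
  isIdempotentElem : IsIdempotentElem P
  pos : IsPosMap P
  pos_one_sub : IsPosMap (1 - P)

variable {P : E →ₗ[ℝ] E}

theorem IsOrderProj.apply_apply (hP : IsOrderProj P) (x : E) : P (P x) = P x :=
  LinearMap.congr_fun hP.isIdempotentElem x

theorem IsOrderProj.one_sub (hP : IsOrderProj P) : IsOrderProj (1 - P) :=
  ⟨hP.isIdempotentElem.one_sub, hP.pos_one_sub, by rw [sub_sub_cancel]; exact hP.pos⟩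

variable [IsOrderedAddMonoid E]

theorem IsOrderProj.apply_le (hP : IsOrderProj P) {x : E} (hx : 0 ≤ x) : P x ≤ x :=
  sub_nonneg.1 (hP.pos_one_sub x hx)

theorem add_le_iff_of_isPosMap (hP : IsPosMap P) (hQ : IsPosMap (1 - P)) {b c u : E}
    (hb : P b = b) (hc : P c = 0) : b + c ≤ u ↔ b ≤ P u ∧ c ≤ u - P u := by
  constructor
  · intro h
    have h0 : 0 ≤ u - (b + c) := sub_nonneg.2 h
    constructor
    · have := hP _ h0
      rwa [map_sub, map_add, hb, hc, add_zero, sub_nonneg] at this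
    · have := hQ _ h0
      rw [← sub_nonneg]
      convert this using 1
      simp only [LinearMap.sub_apply, Module.End.one_apply, map_sub, map_add, hb, hc]
      abel
  · rintro ⟨h1, h2⟩
    calc b + c ≤ P u + (u - P u) := add_le_add h1 h2
      _ = u := add_sub_cancel _ _

theorem mem_upperBounds_pair_neg_iff_of_isPosMap (hP : IsPosMap P) (hQ : IsPosMap (1 - P))
    {b c u : E} (hb : P b = b) (hc : P c = 0) :
    u ∈ upperBounds {b + c, -(b + c)} ↔
      P u ∈ upperBounds {b, -b} ∧ u - P u ∈ upperBounds {c, -c} := by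
  simp only [mem_upperBounds_pair, neg_add, add_le_iff_of_isPosMap hP hQ hb hc,
    add_le_iff_of_isPosMap hP hQ (b := -b) (c := -c) (by rw [map_neg, hb])
      (by rw [map_neg, hc, neg_zero])]
  tauto

theorem uDisjoint_of_isPosMap (hP : IsPosMap P) (hQ : IsPosMap (1 - P)) {b c : E}
    (hb : P b = b) (hc : P c = 0) : UDisjoint b c := by
  rw [uDisjoint_iff]
  ext u
  rw [sub_eq_add_neg, mem_upperBounds_pair_neg_iff_of_isPosMap hP hQ hb hc,
    mem_upperBounds_pair_neg_iff_of_isPosMap hP hQ hb (c := -c) (by rw [map_neg, hc, neg_zero]),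
    neg_neg, pair_comm (-c)]

theorem IsBandProj.isOrderProj [PosSMulMono ℝ E] (hP : IsBandProj P) : IsOrderProj P := by
  obtain ⟨hidem, -, hker⟩ := hP
  have hsplit : ∀ x, 0 ≤ x → 0 ≤ P x ∧ 0 ≤ x - P x := fun x hx => by
    have hx' : x - P x ∈ (LinearMap.ker P : Set E) := by
      change P (x - P x) = 0
      rw [map_sub, ← LinearMap.comp_apply, hidem, sub_self]
    rw [hker] at hx'
    exact (hx' _ ⟨x, rfl⟩).symm.nonneg_of_add_nonneg (by rwa [add_sub_cancel])
  exact ⟨hidem, fun x hx => (hsplit x hx).1, fun x hx => (hsplit x hx).2⟩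

end OrderProj

section PreRiesz

variable {E : Type*} [AddCommGroup E] [PartialOrder E] [IsOrderedAddMonoid E] [Module ℝ E]
  [PosSMulStrictMono ℝ E] [PosSMulReflectLT ℝ E]

theorem IsPreRiesz.isDirectedOrder (hX : IsPreRiesz E) : IsDirectedOrder E := by
  refine ⟨fun a b => ?_⟩
  by_contra! h
  -- with no upper bound of `{a, b}`, the pre-Riesz condition holds vacuously for every shift `x`
  have hpos : ∀ x : E, 0 ≤ x := fun x =>
    hX {a - x, b - x} x (toFinite _) (insert_nonempty _ _) fun u hu => by
      rw [image_pair, add_sub_cancel, add_sub_cancel, mem_upperBounds_pair] at hu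
      exact absurd hu.2 (h u hu.1)
  exact h (a + b) (le_add_of_nonneg_right (hpos b)) (le_add_of_nonneg_left (hpos a))

theorem IsPreRiesz.nonneg_of_forall_upperBounds (hX : IsPreRiesz E) {a c : E}
    (h : ∀ u ∈ upperBounds {c, -c}, -a + c ≤ u ∧ -a + -c ≤ u) : 0 ≤ a :=
  hX {-a + c, -a + -c} a (toFinite _) (insert_nonempty _ _) fun u hu => by
    rw [image_pair, add_neg_cancel_left, add_neg_cancel_left] at hu
    exact mem_upperBounds_pair.2 (h u hu)

variable {P : E →ₗ[ℝ] E}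

theorem IsOrderProj.eq_zero_of_uDisjoint (hX : IsPreRiesz E) (hP : IsOrderProj P) {y : E}
    (hy : UDisjoint y (P y)) : P y = 0 := by
  set b := P y
  set c := y - b
  have hb : P b = b := hP.apply_apply y
  have hc : P c = 0 := by rw [map_sub, hb, sub_self]
  have hbb : P (b + b) = b + b := by rw [map_add, hb]
  -- disjointness of `y = b + c` and `b` says that `±c` and `±(2b + c)` have the same upper bounds
  have hbounds : ∀ u ∈ upperBounds {c, -c},
      P u ∈ upperBounds {b + b, -(b + b)} ∧ u - P u ∈ upperBounds {c, -c} := by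
    intro u hu
    rw [← mem_upperBounds_pair_neg_iff_of_isPosMap hP.pos hP.pos_one_sub hbb hc,
      show b + b + c = y + b by simp only [c]; abel, (uDisjoint_iff.1 hy)]
    exact hu
  have hnonneg : ∀ a ∈ ({b + b, -(b + b)} : Set E), 0 ≤ a := by
    intro a ha
    refine hX.nonneg_of_forall_upperBounds (c := c) fun u hu => ?_
    obtain ⟨hPu, hu'⟩ := hbounds u hu
    have ha' : -a ≤ P u := by
      rcases ha with rfl | rfl
      · exact (mem_upperBounds_pair.1 hPu).2
      · rw [neg_neg]; exact (mem_upperBounds_pair.1 hPu).1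
    obtain ⟨hc₁, hc₂⟩ := mem_upperBounds_pair.1 hu'
    exact ⟨(add_le_add ha' hc₁).trans_eq (add_sub_cancel _ _),
      (add_le_add ha' hc₂).trans_eq (add_sub_cancel _ _)⟩
  have h2b : (2 : ℝ) • b = 0 := by
    rw [two_smul]
    exact le_antisymm (neg_nonneg.1 (hnonneg _ (mem_insert_of_mem _ rfl)))
      (hnonneg _ (mem_insert _ _))
  exact (smul_eq_zero.1 h2b).resolve_left two_ne_zero

theorem IsOrderProj.ker_eq_dComp_range (hX : IsPreRiesz E) (hP : IsOrderProj P) :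
    (LinearMap.ker P : Set E) = dComp (range P) := by
  ext z
  constructor
  · rintro hz _ ⟨x, rfl⟩
    exact (uDisjoint_of_isPosMap hP.pos hP.pos_one_sub (hP.apply_apply x) hz).symm
  · intro hz
    exact hP.eq_zero_of_uDisjoint hX (hz _ ⟨z, rfl⟩)

theorem IsOrderProj.range_eq_dComp_ker (hX : IsPreRiesz E) (hP : IsOrderProj P) :
    range P = dComp (LinearMap.ker P : Set E) := by
  rw [← LinearMap.coe_range, LinearMap.IsIdempotentElem.range_eq_ker_one_sub hP.isIdempotentElem,
    hP.one_sub.ker_eq_dComp_range hX,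
    LinearMap.IsIdempotentElem.ker_eq_range_one_sub hP.isIdempotentElem, LinearMap.coe_range]

theorem IsOrderProj.isBandProj (hX : IsPreRiesz E) (hP : IsOrderProj P) : IsBandProj P := by
  have hker := hP.ker_eq_dComp_range hX
  refine ⟨hP.isIdempotentElem, ⟨?_, ?_, fun x => ⟨P x, ⟨x, rfl⟩, x - P x, ?_, ?_⟩⟩, hker⟩
  · rw [IsBand, ← hker, ← hP.range_eq_dComp_ker hX]
  · ext z
    constructor
    · rintro ⟨⟨x, rfl⟩, hz⟩
      rw [← hker, SetLike.mem_coe, LinearMap.mem_ker, hP.apply_apply] at hz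
      rw [hz, mem_singleton_iff]
    · rintro rfl
      exact ⟨⟨0, map_zero P⟩, hker ▸ zero_mem (LinearMap.ker P)⟩
  · rw [← hker, SetLike.mem_coe, LinearMap.mem_ker, map_sub, hP.apply_apply, sub_self]
  · rw [add_sub_cancel]

end PreRiesz

section Limit

variable {E : Type*} [AddCommGroup E] [PartialOrder E] [IsOrderedAddMonoid E] [Module ℝ E]
  [IsDirectedOrder E]

theorem IsOrderProj.comp_eq_of_le {Q T : E →ₗ[ℝ] E} (hQ : IsOrderProj Q)
    (hT : ∀ x, 0 ≤ x → 0 ≤ T x ∧ T x ≤ Q x) : Q ∘ₗ T = T := by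
  refine LinearMap.ext_of_nonneg fun x hx => le_antisymm (hQ.apply_le (hT x hx).1) ?_
  -- `(1 - Q) (T x) ≤ (1 - Q) (Q x) = 0`
  have h := hQ.pos_one_sub _ (sub_nonneg.2 (hT x hx).2)
  rwa [LinearMap.sub_apply, Module.End.one_apply, map_sub, hQ.apply_apply,
    sub_sub_sub_cancel_left, sub_nonneg] at h

variable {J : Type*} {P : J → E →ₗ[ℝ] E} {P₀ : E →ₗ[ℝ] E}

theorem apply_eq_self_of_isGLB (hP₀ : ∀ x, 0 ≤ x → IsGLB (range fun j => P j x) (P₀ x)) {z : E}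
    (hz : ∀ j, P j z = z) : P₀ z = z := by
  obtain ⟨p, q, hp, hq, rfl⟩ := exists_nonneg_sub_eq z
  have hshift : (range fun j => P j p) = (p - q + ·) '' range fun j => P j q := by
    rw [← range_comp]
    congr 1
    funext j
    rw [Function.comp_apply, ← hz j, map_sub, sub_add_cancel]
  have h := (OrderIso.addLeft (p - q)).isGLB_image'.2 (hP₀ q hq)
  rw [map_sub, (hP₀ p hp).unique (hshift ▸ h)]
  exact add_sub_cancel_right _ _

theorem apply_apply_eq_of_isGLB (hP : ∀ j, IsOrderProj (P j))
    (hP₀ : ∀ x, 0 ≤ x → IsGLB (range fun j => P j x) (P₀ x)) (j : J) (x : E) :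
    P j (P₀ x) = P₀ x :=
  LinearMap.congr_fun ((hP j).comp_eq_of_le fun y hy =>
    ⟨(hP₀ y hy).2 (by rintro _ ⟨i, rfl⟩; exact (hP i).pos y hy), (hP₀ y hy).1 ⟨j, rfl⟩⟩) x

theorem isOrderProj_of_isGLB [Nonempty J] (hP : ∀ j, IsOrderProj (P j))
    (hP₀ : ∀ x, 0 ≤ x → IsGLB (range fun j => P j x) (P₀ x)) : IsOrderProj P₀ := by
  obtain ⟨j₀⟩ := ‹Nonempty J›
  refine ⟨LinearMap.ext fun x =>
      apply_eq_self_of_isGLB hP₀ fun j => apply_apply_eq_of_isGLB hP hP₀ j x,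
    fun x hx => (hP₀ x hx).2 ?_, fun x hx => sub_nonneg.2 ?_⟩
  · rintro _ ⟨j, rfl⟩
    exact (hP j).pos x hx
  · exact ((hP₀ x hx).1 ⟨j₀, rfl⟩).trans ((hP j₀).apply_le hx)

theorem range_eq_iInter_of_isGLB (hP : ∀ j, IsOrderProj (P j))
    (hP₀ : ∀ x, 0 ≤ x → IsGLB (range fun j => P j x) (P₀ x)) :
    range P₀ = ⋂ j, range (P j) := by
  ext z
  simp only [mem_iInter, mem_range]
  constructor
  · rintro ⟨x, rfl⟩ j
    exact ⟨P₀ x, apply_apply_eq_of_isGLB hP hP₀ j x⟩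
  · intro hz
    refine ⟨z, apply_eq_self_of_isGLB hP₀ fun j => ?_⟩
    obtain ⟨x, rfl⟩ := hz j
    exact (hP j).apply_apply x

end Limit

/-- A decreasing net of band projections on a Dedekind complete pre-Riesz space converges
(pointwise on the cone, in order) to a band projection whose range is the intersection of
the ranges. -/
theorem stmt_8 (hX : IsPreRiesz X)
    (hdc : ∀ A : Set X, A.Nonempty → DirectedOn (· ≤ ·) A → BddAbove A → ∃ s, IsLUB A s)
    {J : Type*} [Preorder J] [Nonempty J] (hdir : ∀ i j : J, ∃ k, i ≤ k ∧ j ≤ k)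
    (P : J → (X →ₗ[ℝ] X)) (hP : ∀ j, IsBandProj (P j))
    (hdec : ∀ i j : J, i ≤ j → IsPosMap (P i - P j)) :
    ∃ P₀ : X →ₗ[ℝ] X, IsBandProj P₀ ∧
      (∀ x : X, 0 ≤ x → IsGLB (Set.range fun j => P j x) (P₀ x)) ∧
      Set.range ⇑P₀ = ⋂ j, Set.range ⇑(P j) := by
  have : IsDirectedOrder J := ⟨hdir⟩
  have : IsDirectedOrder X := hX.isDirectedOrder
  have hproj : ∀ j, IsOrderProj (P j) := fun j => (hP j).isOrderProj
  obtain ⟨P₀, hP₀⟩ := exists_linearMap_isGLB_of_antitone hdc P (fun j => (hproj j).pos)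
    fun x hx i j hij => sub_nonneg.1 (hdec i j hij x hx)
  exact ⟨P₀, (isOrderProj_of_isGLB hproj hP₀).isBandProj hX, hP₀,
    range_eq_iInter_of_isGLB hproj hP₀⟩
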